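/- arXiv:1810.06778 — 3 statements merged into one kernel-verified Lean document; each statement's English description precedes it below -/
import Mathlib

section
/- Let A = R_P[x1,x2; σ, δ, τ] be a right double Ore extension of a K-algebra R, so that for each r ∈ R one has x1·r = σ11(r)x1 + σ12(r)x2 + δ1(r) and x2·r = σ21(r)x1 + σ22(r)x2 + δ2(r) with uniquely determined coefficients in R. Then the map σ : R → M₂(R) sending r to the 2×2 matrix (σij(r)) is a K-algebra homomorphism. -/
/-- A right double Ore extension `A = R_P[x1,x2; σ, δ, τ]` of a `K`-algebra `R`. -/
structure RightDOE (K R A : Type*) [Field K] [Ring R] [Algebra K R]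
    [Ring A] [Algebra K A] where
  ι : R →ₐ[K] A
  inj : Function.Injective ι
  x1 : A
  x2 : A
  p12 : K
  p11 : K
  τ0 : R
  τ1 : R
  τ2 : R
  σ11 : R → R
  σ12 : R → R
  σ21 : R → R
  σ22 : R → R
  δ1 : R → R
  δ2 : R → R
  gen : Algebra.adjoin K (Set.range ι ∪ {x1, x2}) = ⊤
  basis : ∀ a : A, ∃! c : (ℕ × ℕ) →₀ R,
      a = c.sum fun p r => ι r * (x1 ^ p.1 * x2 ^ p.2)
  rel : x2 * x1 = p12 • (x1 * x2) + p11 • (x1 * x1) + ι τ1 * x1 + ι τ2 * x2 + ι τ0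
  comm1 : ∀ r : R, x1 * ι r = ι (σ11 r) * x1 + ι (σ12 r) * x2 + ι (δ1 r)
  comm2 : ∀ r : R, x2 * ι r = ι (σ21 r) * x1 + ι (σ22 r) * x2 + ι (δ2 r)

/-- A (two-sided) double Ore extension: also a left double Ore extension on the same
generators. -/
structure DOE (K R A : Type*) [Field K] [Ring R] [Algebra K R]
    [Ring A] [Algebra K A] extends RightDOE K R A where
  basisR : ∀ a : A, ∃! c : (ℕ × ℕ) →₀ R,
      a = c.sum fun p r => (x1 ^ p.1 * x2 ^ p.2) * ι r
  p12' : K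
  p11' : K
  τ0' : R
  τ1' : R
  τ2' : R
  relL : x1 * x2 = p12' • (x2 * x1) + p11' • (x1 * x1) + x1 * ι τ1' + x2 * ι τ2' + ι τ0'

/-- A skew PBW extension `A = σ(R)⟨x1, x2⟩` in two variables. -/
structure SkewPBW2 (K R A : Type*) [Field K] [Ring R] [Algebra K R]
    [Ring A] [Algebra K A] where
  ι : R →ₐ[K] A
  inj : Function.Injective ι
  x1 : A
  x2 : A
  σ1 : R → R
  σ2 : R → R
  δ1 : R → R
  δ2 : R → R
  σ1_ne : ∀ r : R, r ≠ 0 → σ1 r ≠ 0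
  σ2_ne : ∀ r : R, r ≠ 0 → σ2 r ≠ 0
  c12 : R
  c12_ne : c12 ≠ 0
  τ0 : R
  τ1 : R
  τ2 : R
  basis : ∀ a : A, ∃! c : (ℕ × ℕ) →₀ R,
      a = c.sum fun p r => ι r * (x1 ^ p.1 * x2 ^ p.2)
  comm1 : ∀ r : R, x1 * ι r = ι (σ1 r) * x1 + ι (δ1 r)
  comm2 : ∀ r : R, x2 * ι r = ι (σ2 r) * x2 + ι (δ2 r)
  rel : x2 * x1 = ι c12 * (x1 * x2) + ι τ1 * x1 + ι τ2 * x2 + ι τ0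

/-- A skew PBW extension in two variables is quasi-commutative when the derivations
and the tails vanish. -/
def SkewPBW2.QuasiCommutative {K R A : Type*} [Field K] [Ring R] [Algebra K R]
    [Ring A] [Algebra K A] (S : SkewPBW2 K R A) : Prop :=
  (∀ r : R, S.δ1 r = 0) ∧ (∀ r : R, S.δ2 r = 0) ∧ S.τ0 = 0 ∧ S.τ1 = 0 ∧ S.τ2 = 0

/-- A graded skew PBW extension of an ℕ-graded algebra `R` with grading `ℛ`,
the grading on `A` being `𝒜` with `deg x1 = deg x2 = 1`. -/
structure GradedSkewPBW2 (K R A : Type*) [Field K] [Ring R] [Algebra K R]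
    [Ring A] [Algebra K A] (ℛ : ℕ → Submodule K R) (𝒜 : ℕ → Submodule K A)
    extends SkewPBW2 K R A where
  σ1_bij : Function.Bijective σ1
  σ2_bij : Function.Bijective σ2
  σ1_graded : ∀ m : ℕ, ∀ r ∈ ℛ m, σ1 r ∈ ℛ m
  σ2_graded : ∀ m : ℕ, ∀ r ∈ ℛ m, σ2 r ∈ ℛ m
  δ1_graded : ∀ m : ℕ, ∀ r ∈ ℛ m, δ1 r ∈ ℛ (m + 1)
  δ2_graded : ∀ m : ℕ, ∀ r ∈ ℛ m, δ2 r ∈ ℛ (m + 1)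
  c12_mem : c12 ∈ ℛ 0
  τ1_mem : τ1 ∈ ℛ 1
  τ2_mem : τ2 ∈ ℛ 1
  τ0_mem : τ0 ∈ ℛ 2
  x1_mem : x1 ∈ 𝒜 1
  x2_mem : x2 ∈ 𝒜 1
  ι_graded : ∀ m : ℕ, ∀ r ∈ ℛ m, ι r ∈ 𝒜 m
  grading_eq : ∀ p : ℕ, 𝒜 p = Submodule.span K
      {a | ∃ t i j : ℕ, ∃ r ∈ ℛ t, t + i + j = p ∧ a = ι r * (x1 ^ i * x2 ^ j)}

/-- A graded right double Ore extension, with all defining relations homogeneous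
for `deg x1 = deg x2 = 1`. -/
structure GradedRightDOE (K R A : Type*) [Field K] [Ring R] [Algebra K R]
    [Ring A] [Algebra K A] (ℛ : ℕ → Submodule K R) (𝒜 : ℕ → Submodule K A)
    extends RightDOE K R A where
  σ11_graded : ∀ m : ℕ, ∀ r ∈ ℛ m, σ11 r ∈ ℛ m
  σ12_graded : ∀ m : ℕ, ∀ r ∈ ℛ m, σ12 r ∈ ℛ m
  σ21_graded : ∀ m : ℕ, ∀ r ∈ ℛ m, σ21 r ∈ ℛ m
  σ22_graded : ∀ m : ℕ, ∀ r ∈ ℛ m, σ22 r ∈ ℛ m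
  δ1_graded : ∀ m : ℕ, ∀ r ∈ ℛ m, δ1 r ∈ ℛ (m + 1)
  δ2_graded : ∀ m : ℕ, ∀ r ∈ ℛ m, δ2 r ∈ ℛ (m + 1)
  τ1_mem : τ1 ∈ ℛ 1
  τ2_mem : τ2 ∈ ℛ 1
  τ0_mem : τ0 ∈ ℛ 2
  x1_mem : x1 ∈ 𝒜 1
  x2_mem : x2 ∈ 𝒜 1
  ι_graded : ∀ m : ℕ, ∀ r ∈ ℛ m, ι r ∈ 𝒜 m
  grading_eq : ∀ p : ℕ, 𝒜 p = Submodule.span K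
      {a | ∃ t i j : ℕ, ∃ r ∈ ℛ t, t + i + j = p ∧ a = ι r * (x1 ^ i * x2 ^ j)}

/-- A graded right double Ore extension is trimmed when δ and the tail vanish. -/
def GradedRightDOE.Trimmed {K R A : Type*} [Field K] [Ring R] [Algebra K R]
    [Ring A] [Algebra K A] {ℛ : ℕ → Submodule K R} {𝒜 : ℕ → Submodule K A}
    (D : GradedRightDOE K R A ℛ 𝒜) : Prop :=
  (∀ r : R, D.δ1 r = 0) ∧ (∀ r : R, D.δ2 r = 0) ∧ D.τ0 = 0 ∧ D.τ1 = 0 ∧ D.τ2 = 0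

/-- A graded (two-sided) double Ore extension. -/
structure GradedDOE (K R A : Type*) [Field K] [Ring R] [Algebra K R]
    [Ring A] [Algebra K A] (ℛ : ℕ → Submodule K R) (𝒜 : ℕ → Submodule K A)
    extends GradedRightDOE K R A ℛ 𝒜 where
  basisR : ∀ a : A, ∃! c : (ℕ × ℕ) →₀ R,
      a = c.sum fun p r => (x1 ^ p.1 * x2 ^ p.2) * ι r
  p12' : K
  p11' : K
  τ0' : R
  τ1' : R
  τ2' : R
  relL : x1 * x2 = p12' • (x2 * x1) + p11' • (x1 * x1) + x1 * ι τ1' + x2 * ι τ2' + ι τ0'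

/-- A graded algebra is connected when its degree zero part is the base field. -/
def GradingConnected {K B : Type*} [Field K] [Ring B] [Algebra K B]
    (𝒜 : ℕ → Submodule K B) : Prop :=
  𝒜 0 = Submodule.span K ({1} : Set B)

/-!
Each `x_i r` has the unique expansion `σ_i1(r) x₁ + σ_i2(r) x₂ + δ_i(r)` in the free left
`R`-module with basis the monomials `x₁^a x₂^b`. Comparing coefficients in `x_i (r + s)`,
`x_i (k r)` and `x_i 1` gives linearity and unitality of `σ`. For multiplicativity, expand
`x_i (r s) = (x_i r) s = Σ_j σ_ij(r) (x_j s) + δ_i(r) s` once more with the same relations: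
the coefficient of `x_k` is `Σ_j σ_ij(r) σ_jk(s)`, the matrix product.
-/
namespace RightDOE

variable {K R A : Type*} [Field K] [Ring R] [Algebra K R] [Ring A] [Algebra K A]
  (D : RightDOE K R A)

def x : Fin 2 → A := ![D.x1, D.x2]

def σ (r : R) : Matrix (Fin 2) (Fin 2) R := !![D.σ11 r, D.σ12 r; D.σ21 r, D.σ22 r]

def δ (r : R) : Fin 2 → R := ![D.δ1 r, D.δ2 r]

def linComb : (Fin 2 → R) × R →ₗ[K] A where
  toFun p := ∑ j, D.ι (p.1 j) * D.x j + D.ι p.2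
  map_add' p q := by
    simp only [Prod.fst_add, Prod.snd_add, Pi.add_apply, map_add, add_mul,
      Finset.sum_add_distrib]
    abel
  map_smul' k p := by
    simp only [Prod.smul_fst, Prod.smul_snd, Pi.smul_apply, map_smul, smul_mul_assoc,
      RingHom.id_apply, smul_add, Finset.smul_sum]

lemma linComb_apply (p : (Fin 2 → R) × R) :
    D.linComb p = ∑ j, D.ι (p.1 j) * D.x j + D.ι p.2 := rfl

lemma basis_sum_injective :
    Function.Injective fun c : (ℕ × ℕ) →₀ R =>
      c.sum fun p r => D.ι r * (D.x1 ^ p.1 * D.x2 ^ p.2) := by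
  intro c c' h
  obtain ⟨_, -, huniq⟩ := D.basis (c.sum fun p r => D.ι r * (D.x1 ^ p.1 * D.x2 ^ p.2))
  exact (huniq c rfl).trans (huniq c' h).symm

noncomputable def toFinsupp (p : (Fin 2 → R) × R) : (ℕ × ℕ) →₀ R :=
  Finsupp.single (1, 0) (p.1 0) + Finsupp.single (0, 1) (p.1 1) + Finsupp.single (0, 0) p.2

lemma toFinsupp_injective : Function.Injective (toFinsupp (R := R)) := by
  intro p q h
  have h10 := DFunLike.congr_fun h (1, 0)
  have h01 := DFunLike.congr_fun h (0, 1)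
  have h00 := DFunLike.congr_fun h (0, 0)
  simp [toFinsupp] at h10 h01 h00
  exact Prod.ext (funext fun j => by fin_cases j <;> assumption) h00

lemma sum_toFinsupp (p : (Fin 2 → R) × R) :
    (toFinsupp p).sum (fun q r => D.ι r * (D.x1 ^ q.1 * D.x2 ^ q.2)) = D.linComb p := by
  obtain ⟨v, c⟩ := p
  rw [toFinsupp, Finsupp.sum_add_index' (by simp) (by intros; simp [add_mul]),
    Finsupp.sum_add_index' (by simp) (by intros; simp [add_mul])]
  simp [linComb_apply, x, Fin.sum_univ_two]

lemma linComb_injective : Function.Injective D.linComb := by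
  intro p q h
  apply toFinsupp_injective
  apply D.basis_sum_injective
  simpa only [sum_toFinsupp] using h

def row (i : Fin 2) (r : R) : (Fin 2 → R) × R := (D.σ r i, D.δ r i)

lemma linComb_row (i : Fin 2) (r : R) : D.linComb (D.row i r) = D.x i * D.ι r := by
  fin_cases i <;> simp [row, linComb_apply, σ, δ, x, comm1, comm2]

lemma row_add (i : Fin 2) (r s : R) : D.row i (r + s) = D.row i r + D.row i s :=
  D.linComb_injective <| by simp only [linComb_row, map_add, mul_add]

lemma row_smul (i : Fin 2) (k : K) (r : R) : D.row i (k • r) = k • D.row i r :=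
  D.linComb_injective <| by simp only [linComb_row, map_smul, mul_smul_comm]

lemma row_one (i : Fin 2) : D.row i 1 = (Pi.single i 1, 0) :=
  D.linComb_injective <| by
    rw [linComb_row, linComb_apply]
    fin_cases i <;> simp [Fin.sum_univ_two, x]

lemma ι_mul_linComb (a : R) (p : (Fin 2 → R) × R) :
    D.ι a * D.linComb p = D.linComb (a • p) := by
  simp only [linComb_apply, mul_add, Finset.mul_sum, ← mul_assoc, ← map_mul, Prod.smul_fst,
    Prod.smul_snd, Pi.smul_apply, smul_eq_mul]

lemma linComb_mul_ι (p : (Fin 2 → R) × R) (s : R) :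
    D.linComb p * D.ι s = D.linComb (∑ j, p.1 j • D.row j s + (0, p.2 * s)) := by
  rw [map_add, map_sum]
  simp only [← ι_mul_linComb, linComb_row, D.linComb_apply p, D.linComb_apply (0, _)]
  simp [add_mul, mul_assoc]

lemma row_mul (i : Fin 2) (r s : R) :
    D.row i (r * s) = ∑ j, D.σ r i j • D.row j s + (0, D.δ r i * s) :=
  D.linComb_injective <| by
    rw [linComb_row, map_mul, ← mul_assoc, ← linComb_row]
    exact D.linComb_mul_ι (D.row i r) s

lemma σ_one : D.σ 1 = 1 := Matrix.ext fun i j => by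
  simpa [Matrix.one_apply, Pi.single_apply, eq_comm, row] using
    congrFun (congrArg Prod.fst (D.row_one i)) j

lemma σ_mul (r s : R) : D.σ (r * s) = D.σ r * D.σ s := Matrix.ext fun i k => by
  simpa [Matrix.mul_apply, row] using congrFun (congrArg Prod.fst (D.row_mul i r s)) k

def σAlgHom : R →ₐ[K] Matrix (Fin 2) (Fin 2) R :=
  AlgHom.ofLinearMap
    { toFun := D.σ
      map_add' r s := Matrix.ext fun i => congrFun (congrArg Prod.fst (D.row_add i r s))
      map_smul' k r := Matrix.ext fun i => congrFun (congrArg Prod.fst (D.row_smul i k r)) }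
    D.σ_one D.σ_mul

end RightDOE

/-- the coefficient maps of a right double Ore extension assemble into a
`K`-algebra homomorphism `σ : R → M₂(R)`. -/
theorem stmt_0 {K R A : Type*} [Field K] [Ring R] [Algebra K R] [Ring A] [Algebra K A]
    (D : RightDOE K R A) :
    ∃ f : R →ₐ[K] Matrix (Fin 2) (Fin 2) R,
      ∀ r : R, f r = !![D.σ11 r, D.σ12 r; D.σ21 r, D.σ22 r] :=
  ⟨D.σAlgHom, fun _ => rfl⟩
end

section
/- Let A = σ(R)⟨x1, x2⟩ be a connected graded skew PBW extension of a K-algebra R. Then A is a connected graded right double Ore extension of R: the defining relation takes the form x2x1 = c_{1,2}·x1x2 + τ1x1 + τ2x2 + τ0 with c_{1,2} ∈ K \ {0}, τ1, τ2 ∈ R₁, τ0 ∈ R₂, and x1R + x2R ⊆ Rx1 + Rx2 + R. -/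
/-!
The degree-zero coefficient `c₁₂ ∈ R₀` maps into `A₀ = K`, so by injectivity of `R → A` it is a
nonzero scalar. The commutation rules `xᵢ r = σᵢ(r) xᵢ + δᵢ(r)` of a skew PBW extension are then the
right double Ore rules with `σ₁₂ = σ₂₁ = 0`, and its relation is the double Ore relation with
`p₁₂ = c₁₂` and `p₁₁ = 0`; all gradings carry over unchanged.
-/

theorem SkewPBW2.adjoin_eq_top {K R A : Type*} [Field K] [Ring R] [Algebra K R] [Ring A]
    [Algebra K A] (S : SkewPBW2 K R A) :
    Algebra.adjoin K (Set.range S.ι ∪ {S.x1, S.x2}) = ⊤ := by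
  set B := Algebra.adjoin K (Set.range S.ι ∪ {S.x1, S.x2})
  have hx1 : S.x1 ∈ B := Algebra.subset_adjoin (Or.inr (by simp))
  have hx2 : S.x2 ∈ B := Algebra.subset_adjoin (Or.inr (by simp))
  refine eq_top_iff.mpr fun a _ => ?_
  obtain ⟨c, rfl, -⟩ := S.basis a
  refine Subalgebra.sum_mem _ fun p _ => Subalgebra.mul_mem _ ?_ ?_
  · exact Algebra.subset_adjoin (Or.inl ⟨_, rfl⟩)
  · exact Subalgebra.mul_mem _ (Subalgebra.pow_mem _ hx1 _) (Subalgebra.pow_mem _ hx2 _)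

theorem exists_algebraMap_eq_of_mem_span_one {K R A : Type*} [Field K] [Ring R] [Algebra K R]
    [Ring A] [Algebra K A] {ι : R →ₐ[K] A} (hι : Function.Injective ι) {c : R}
    (hc : ι c ∈ Submodule.span K ({1} : Set A)) : ∃ k : K, algebraMap K R k = c := by
  obtain ⟨k, hk⟩ := Submodule.mem_span_singleton.mp hc
  exact ⟨k, hι (by rw [AlgHom.commutes, Algebra.algebraMap_eq_smul_one, hk])⟩

def GradedSkewPBW2.toGradedRightDOE {K R A : Type*} [Field K] [Ring R] [Algebra K R] [Ring A]
    [Algebra K A] {ℛ : ℕ → Submodule K R} {𝒜 : ℕ → Submodule K A}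
    (G : GradedSkewPBW2 K R A ℛ 𝒜) (k : K) (hk : algebraMap K R k = G.c12) :
    GradedRightDOE K R A ℛ 𝒜 where
  ι := G.ι
  inj := G.inj
  x1 := G.x1
  x2 := G.x2
  p12 := k
  p11 := 0
  τ0 := G.τ0
  τ1 := G.τ1
  τ2 := G.τ2
  σ11 := G.σ1
  σ12 := 0
  σ21 := 0
  σ22 := G.σ2
  δ1 := G.δ1
  δ2 := G.δ2
  gen := G.adjoin_eq_top
  basis := G.basis
  rel := by
    rw [G.rel, ← hk, AlgHom.commutes, Algebra.algebraMap_eq_smul_one, smul_mul_assoc, one_mul,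
      zero_smul, add_zero]
  comm1 r := by rw [G.comm1 r, Pi.zero_apply, map_zero, zero_mul, add_zero]
  comm2 r := by rw [G.comm2 r, Pi.zero_apply, map_zero, zero_mul, zero_add]
  σ11_graded := G.σ1_graded
  σ12_graded m _ _ := (ℛ m).zero_mem
  σ21_graded m _ _ := (ℛ m).zero_mem
  σ22_graded := G.σ2_graded
  δ1_graded := G.δ1_graded
  δ2_graded := G.δ2_graded
  τ1_mem := G.τ1_mem
  τ2_mem := G.τ2_mem
  τ0_mem := G.τ0_mem
  x1_mem := G.x1_mem
  x2_mem := G.x2_mem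
  ι_graded := G.ι_graded
  grading_eq := G.grading_eq

theorem stmt_7_general {K R A : Type*} [Field K] [Ring R] [Algebra K R] [Ring A] [Algebra K A]
    (ℛ : ℕ → Submodule K R) (𝒜 : ℕ → Submodule K A)
    (G : GradedSkewPBW2 K R A ℛ 𝒜) (hA : GradingConnected 𝒜) :
    ∃ D : GradedRightDOE K R A ℛ 𝒜, D.ι = G.ι ∧ D.x1 = G.x1 ∧ D.x2 = G.x2 ∧
      D.p11 = 0 ∧ D.p12 ≠ 0 ∧ algebraMap K R D.p12 = G.c12 ∧
      D.τ1 = G.τ1 ∧ D.τ2 = G.τ2 ∧ D.τ0 = G.τ0 := by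
  have hc : G.ι G.c12 ∈ Submodule.span K ({1} : Set A) := hA ▸ G.ι_graded 0 G.c12 G.c12_mem
  obtain ⟨k, hk⟩ := exists_algebraMap_eq_of_mem_span_one G.inj hc
  have hk0 : k ≠ 0 := by
    rintro rfl
    exact G.c12_ne (by rw [← hk, map_zero])
  exact ⟨G.toGradedRightDOE k hk, rfl, rfl, rfl, rfl, hk0, hk, rfl, rfl, rfl⟩

/-- a connected graded skew PBW extension `A = σ(R)⟨x1,x2⟩` is a connected
graded right double Ore extension of `R`, with `p11 = 0`, `p12 = c_{1,2} ∈ K \ {0}`,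
`τ1, τ2 ∈ R₁`, `τ0 ∈ R₂`. -/
theorem stmt_7 {K R A : Type*} [Field K] [Ring R] [Algebra K R] [Ring A] [Algebra K A]
    (ℛ : ℕ → Submodule K R) (𝒜 : ℕ → Submodule K A)
    [GradedAlgebra ℛ] [GradedAlgebra 𝒜]
    (G : GradedSkewPBW2 K R A ℛ 𝒜) (hA : GradingConnected 𝒜) :
    ∃ D : GradedRightDOE K R A ℛ 𝒜, D.ι = G.ι ∧ D.x1 = G.x1 ∧ D.x2 = G.x2 ∧
      D.p11 = 0 ∧ D.p12 ≠ 0 ∧ algebraMap K R D.p12 = G.c12 ∧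
      D.τ1 = G.τ1 ∧ D.τ2 = G.τ2 ∧ D.τ0 = G.τ0 :=
  stmt_7_general ℛ 𝒜 G hA
end

section
/- Let A = σ(R)⟨x1, x2⟩ be a connected graded quasi-commutative skew PBW extension of R. Then A is a connected graded trimmed right double Ore extension of R: A = R_P[x1,x2; σ] with P = {c_{1,2}, 0}, σ the diagonal matrix map with entries σ1, σ2, the derivation δ = 0, and tail τ = {0,0,0}. -/
theorem GradingConnected.exists_algebraMap_eq {K B : Type*} [Field K] [Ring B] [Algebra K B]
    {𝒜 : ℕ → Submodule K B} (h𝒜 : GradingConnected 𝒜) {a : B} (ha : a ∈ 𝒜 0) :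
    ∃ k : K, algebraMap K B k = a := by
  rw [h𝒜] at ha
  obtain ⟨k, rfl⟩ := Submodule.mem_span_singleton.mp ha
  exact ⟨k, Algebra.algebraMap_eq_smul_one k⟩

namespace SkewPBW2

variable {K R A : Type*} [Field K] [Ring R] [Algebra K R] [Ring A] [Algebra K A]

theorem adjoin_eq_top_s8 (S : SkewPBW2 K R A) :
    Algebra.adjoin K (Set.range S.ι ∪ {S.x1, S.x2}) = ⊤ := by
  refine eq_top_iff.mpr fun a _ => ?_
  obtain ⟨c, rfl, -⟩ := S.basis a
  have hx1 : S.x1 ∈ Algebra.adjoin K (Set.range S.ι ∪ {S.x1, S.x2}) :=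
    Algebra.subset_adjoin (Or.inr (Set.mem_insert _ _))
  have hx2 : S.x2 ∈ Algebra.adjoin K (Set.range S.ι ∪ {S.x1, S.x2}) :=
    Algebra.subset_adjoin (Or.inr (Set.mem_insert_of_mem _ rfl))
  exact Subalgebra.sum_mem _ fun p _ =>
    mul_mem (Algebra.subset_adjoin (Or.inl ⟨_, rfl⟩)) (mul_mem (pow_mem hx1 _) (pow_mem hx2 _))

variable {S : SkewPBW2 K R A} (hS : S.QuasiCommutative)
include hS

theorem QuasiCommutative.x1_mul (r : R) : S.x1 * S.ι r = S.ι (S.σ1 r) * S.x1 := by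
  rw [S.comm1, hS.1, map_zero, add_zero]

theorem QuasiCommutative.x2_mul (r : R) : S.x2 * S.ι r = S.ι (S.σ2 r) * S.x2 := by
  rw [S.comm2, hS.2.1, map_zero, add_zero]

theorem QuasiCommutative.x2_mul_x1 {k : K} (hk : algebraMap K R k = S.c12) :
    S.x2 * S.x1 = k • (S.x1 * S.x2) := by
  obtain ⟨-, -, hτ0, hτ1, hτ2⟩ := hS
  rw [S.rel, hτ0, hτ1, hτ2, ← hk, AlgHom.commutes, ← Algebra.smul_def]
  simp only [map_zero, zero_mul, add_zero]

end SkewPBW2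

namespace GradedSkewPBW2

variable {K R A : Type*} [Field K] [Ring R] [Algebra K R] [Ring A] [Algebra K A]
  {ℛ : ℕ → Submodule K R} {𝒜 : ℕ → Submodule K A}

theorem exists_algebraMap_eq_c12 (G : GradedSkewPBW2 K R A ℛ 𝒜) (h𝒜 : GradingConnected 𝒜) :
    ∃ k : K, algebraMap K R k = G.c12 := by
  obtain ⟨k, hk⟩ := h𝒜.exists_algebraMap_eq (G.ι_graded 0 G.c12 G.c12_mem)
  exact ⟨k, G.inj (by rw [AlgHom.commutes, hk])⟩

def toGradedRightDOE_s8 (G : GradedSkewPBW2 K R A ℛ 𝒜) (hq : G.QuasiCommutative) (k : K)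
    (hk : algebraMap K R k = G.c12) : GradedRightDOE K R A ℛ 𝒜 where
  ι := G.ι
  inj := G.inj
  x1 := G.x1
  x2 := G.x2
  p12 := k
  p11 := 0
  τ0 := 0
  τ1 := 0
  τ2 := 0
  σ11 := G.σ1
  σ12 _ := 0
  σ21 _ := 0
  σ22 := G.σ2
  δ1 _ := 0
  δ2 _ := 0
  gen := G.adjoin_eq_top_s8
  basis := G.basis
  rel := by simp [hq.x2_mul_x1 hk]
  comm1 r := by simp [hq.x1_mul r]
  comm2 r := by simp [hq.x2_mul r]
  σ11_graded := G.σ1_graded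
  σ12_graded _ _ _ := zero_mem _
  σ21_graded _ _ _ := zero_mem _
  σ22_graded := G.σ2_graded
  δ1_graded _ _ _ := zero_mem _
  δ2_graded _ _ _ := zero_mem _
  τ1_mem := zero_mem _
  τ2_mem := zero_mem _
  τ0_mem := zero_mem _
  x1_mem := G.x1_mem
  x2_mem := G.x2_mem
  ι_graded := G.ι_graded
  grading_eq := G.grading_eq

end GradedSkewPBW2

theorem stmt_8_general {K R A : Type*} [Field K] [Ring R] [Algebra K R] [Ring A] [Algebra K A]
    (ℛ : ℕ → Submodule K R) (𝒜 : ℕ → Submodule K A)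
    (G : GradedSkewPBW2 K R A ℛ 𝒜) (hq : G.toSkewPBW2.QuasiCommutative)
    (hA : GradingConnected 𝒜) :
    ∃ D : GradedRightDOE K R A ℛ 𝒜, D.Trimmed ∧
      D.ι = G.ι ∧ D.x1 = G.x1 ∧ D.x2 = G.x2 ∧
      D.p11 = 0 ∧ algebraMap K R D.p12 = G.c12 ∧
      D.σ11 = G.σ1 ∧ D.σ22 = G.σ2 ∧
      (∀ r : R, D.σ12 r = 0) ∧ (∀ r : R, D.σ21 r = 0) := by
  obtain ⟨k, hk⟩ := G.exists_algebraMap_eq_c12 hA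
  exact ⟨G.toGradedRightDOE_s8 hq k hk, ⟨fun _ => rfl, fun _ => rfl, rfl, rfl, rfl⟩,
    rfl, rfl, rfl, rfl, hk, rfl, rfl, fun _ => rfl, fun _ => rfl⟩

/-- a connected graded quasi-commutative skew PBW extension of `R` is a
connected graded trimmed right double Ore extension of `R`, with diagonal `σ` given by
`σ1, σ2`, zero derivation, zero tail and `P = {c_{1,2}, 0}`. -/
theorem stmt_8 {K R A : Type*} [Field K] [Ring R] [Algebra K R] [Ring A] [Algebra K A]
    (ℛ : ℕ → Submodule K R) (𝒜 : ℕ → Submodule K A)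
    [GradedAlgebra ℛ] [GradedAlgebra 𝒜]
    (G : GradedSkewPBW2 K R A ℛ 𝒜) (hq : G.toSkewPBW2.QuasiCommutative)
    (hA : GradingConnected 𝒜) :
    ∃ D : GradedRightDOE K R A ℛ 𝒜, D.Trimmed ∧
      D.ι = G.ι ∧ D.x1 = G.x1 ∧ D.x2 = G.x2 ∧
      D.p11 = 0 ∧ algebraMap K R D.p12 = G.c12 ∧
      D.σ11 = G.σ1 ∧ D.σ22 = G.σ2 ∧
      (∀ r : R, D.σ12 r = 0) ∧ (∀ r : R, D.σ21 r = 0) :=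
  stmt_8_general ℛ 𝒜 G hq hA
end
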